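/- Let $A$ be a (not necessarily commutative) ring, let $d : A \to A$ be an additive map, and let $\eta_1, \ldots, \eta_{k-1} \in A$ (for some $k \ge 2$) satisfy: (a) $d(\eta_i \eta_j) = d(\eta_i)\,\eta_j - \eta_i\, d(\eta_j)$ for all $1 \le i, j \le k-1$; (b) $d(\eta_j) = -\sum_{i=1}^{j-1} \eta_i \eta_{j-i}$ for all $1 \le j \le k-1$ (so in particular $d(\eta_1) = 0$). Then $d\left( \sum_{j=1}^{k-1} \eta_j \eta_{k-j} \right) = 0$. -/
import Mathlib


/-- Closedness of the quadratic convolution term: if `d` is an antiderivation on the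
`η_i` and the `η_j` satisfy the Maurer–Cartan recursion up to step `k-1`, then
`∑_{j=1}^{k-1} η_j η_{k-j}` is `d`-closed. -/
theorem stmt_7 (A : Type*) [Ring A] (d : A →+ A) (k : ℕ) (hk : 2 ≤ k) (η : ℕ → A)
    (ha : ∀ i ∈ Finset.Ico 1 k, ∀ j ∈ Finset.Ico 1 k,
      d (η i * η j) = d (η i) * η j - η i * d (η j))
    (hb : ∀ j ∈ Finset.Ico 1 k, d (η j) = -∑ i ∈ Finset.Ico 1 j, η i * η (j - i)) :
    d (∑ j ∈ Finset.Ico 1 k, η j * η (k - j)) = 0 := by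
  have hmem : ∀ j ∈ Finset.Ico 1 k, k - j ∈ Finset.Ico 1 k := by
    intro j hj
    simp only [Finset.mem_Ico] at *
    omega
  rw [map_sum]
  have h1 : ∀ j ∈ Finset.Ico 1 k,
      d (η j * η (k - j)) =
        -((∑ i ∈ Finset.Ico 1 j, η i * η (j - i)) * η (k - j))
          + η j * ∑ i ∈ Finset.Ico 1 (k - j), η i * η (k - j - i) := by
    intro j hj
    rw [ha j hj (k - j) (hmem j hj), hb j hj, hb (k - j) (hmem j hj), neg_mul, mul_neg,
      sub_neg_eq_add]
  rw [Finset.sum_congr rfl h1, Finset.sum_add_distrib, Finset.sum_neg_distrib]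
  have key : ∑ j ∈ Finset.Ico 1 k, (∑ i ∈ Finset.Ico 1 j, η i * η (j - i)) * η (k - j)
      = ∑ j ∈ Finset.Ico 1 k, η j * ∑ i ∈ Finset.Ico 1 (k - j), η i * η (k - j - i) := by
    simp_rw [Finset.sum_mul, Finset.mul_sum]
    rw [Finset.sum_sigma', Finset.sum_sigma']
    refine Finset.sum_nbij' (fun p => ⟨p.2, p.1 - p.2⟩) (fun p => ⟨p.1 + p.2, p.1⟩)
      ?_ ?_ ?_ ?_ ?_
    · rintro ⟨j, i⟩ h
      simp only [Finset.mem_sigma, Finset.mem_Ico] at *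
      omega
    · rintro ⟨j, i⟩ h
      simp only [Finset.mem_sigma, Finset.mem_Ico] at *
      omega
    · rintro ⟨j, i⟩ h
      simp only [Finset.mem_sigma, Finset.mem_Ico] at h
      simp only [Sigma.mk.inj_iff, heq_eq_eq]
      exact ⟨by omega, trivial⟩
    · rintro ⟨j, i⟩ h
      simp only [Finset.mem_sigma, Finset.mem_Ico] at h
      simp only [Sigma.mk.inj_iff, heq_eq_eq]
      exact ⟨trivial, by omega⟩
    · rintro ⟨j, i⟩ h
      simp only [Finset.mem_sigma, Finset.mem_Ico] at h
      simp only
      have hki : k - i - (j - i) = k - j := by omega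
      rw [hki, mul_assoc]
  rw [key, neg_add_cancel]
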